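/- For k ≥ 1, let μ = (k+1,…,k+1,k−1) with k parts equal to k+1 and λ = (k+1,…,k+1,k,k) with k−1 parts equal to k+1. Then every k-deletion of μ and every k-deletion of λ is a (k−1)-deletion of the meet μ ∧ λ = (k+1,…,k+1,k,k−1) (with k−1 parts equal to k+1). -/

import Mathlib

/-- A partition: a nonincreasing sequence of naturals (rows indexed from 0),
with finitely many nonzero parts. -/
def IsPartition (f : ℕ → ℕ) : Prop :=
  (∀ ⦃i j : ℕ⦄, i ≤ j → f j ≤ f i) ∧ {i | f i ≠ 0}.Finite

/-- The number of cells of a partition. -/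
noncomputable def psize (f : ℕ → ℕ) : ℕ := ∑ᶠ i, f i

/-- `δ` is a `k`-deletion of `f`: a partition contained in `f` with `k` fewer cells. -/
def IsDeletion (k : ℕ) (δ f : ℕ → ℕ) : Prop :=
  IsPartition δ ∧ (∀ i, δ i ≤ f i) ∧ psize f = psize δ + k

/-- The conjugate: `conj f c` is the number of cells in (0-indexed) column `c`. -/
noncomputable def conj (f : ℕ → ℕ) (c : ℕ) : ℕ := Set.ncard {i | c < f i}


/-
A `k`-deletion `δ` of `μ` or of `λ` lies below the meet except possibly in the one row where the
shape exceeds the meet by a cell: row `k - 1` of `μ` (length `k + 1`) or row `k` of `λ`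
(length `k`). Keeping that row full would force the first rows of `δ` to be at least as long,
i.e. `|δ| ≥ k (k + 1)`, whereas `|δ| = k² + k - 1`. So `δ ≤ μ ∧ λ`, and since the meet has
one cell fewer than `μ` and `λ`, `δ` is a `(k - 1)`-deletion of it.
-/

lemma psize_eq_sum_range {f : ℕ → ℕ} {n : ℕ} (h : ∀ i, n ≤ i → f i = 0) :
    psize f = ∑ i ∈ Finset.range n, f i := by
  apply finsum_eq_finsetSum_of_support_subset
  intro i hi
  by_contra hin
  exact hi (h i (by simpa using hin))

lemma psize_eq_mul_add_add {f : ℕ → ℕ} {n a : ℕ} (hhead : ∀ i < n, f i = a)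
    (htail : ∀ i, n + 2 ≤ i → f i = 0) :
    psize f = n * a + f n + f (n + 1) := by
  rw [psize_eq_sum_range htail, Finset.sum_range_succ, Finset.sum_range_succ,
    Finset.sum_congr rfl fun i hi => hhead i (Finset.mem_range.mp hi)]
  simp

lemma sum_range_le_psize {f : ℕ → ℕ} (hf : {i | f i ≠ 0}.Finite) (n : ℕ) :
    ∑ i ∈ Finset.range n, f i ≤ psize f := by
  have hsupp : (Function.support f).Finite := hf
  rw [psize, finsum_eq_finsetSum_of_support_subset f
    (s := hsupp.toFinset ∪ Finset.range n) (by simp)]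
  exact Finset.sum_le_sum_of_subset Finset.subset_union_right

lemma IsPartition.mul_le_psize {δ : ℕ → ℕ} (hδ : IsPartition δ) {r c : ℕ} (h : c ≤ δ r) :
    (r + 1) * c ≤ psize δ :=
  calc (r + 1) * c = ∑ _i ∈ Finset.range (r + 1), c := by simp
    _ ≤ ∑ i ∈ Finset.range (r + 1), δ i :=
        Finset.sum_le_sum fun i hi =>
          h.trans (hδ.1 (Nat.lt_succ_iff.mp (Finset.mem_range.mp hi)))
    _ ≤ psize δ := sum_range_le_psize hδ.2 _

lemma IsDeletion.apply_lt_of_psize_lt {j : ℕ} {δ f : ℕ → ℕ} (hδ : IsDeletion j δ f) {r c : ℕ}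
    (hsize : psize f < (r + 1) * c + j) : δ r < c := by
  by_contra! h
  have := hδ.1.mul_le_psize h
  have := hδ.2.2
  omega

lemma IsDeletion.of_le_of_psize_eq_succ {j : ℕ} {δ f g : ℕ → ℕ} (hδ : IsDeletion (j + 1) δ f)
    (hle : ∀ i, δ i ≤ g i) (hsize : psize f = psize g + 1) : IsDeletion j δ g :=
  ⟨hδ.1, hle, by have := hδ.2.2; omega⟩

/-- Every k-deletion of μ and of λ is a (k−1)-deletion of the meet μ ∧ λ. -/
theorem deletions_below_meet (k : ℕ) (hk : 1 ≤ k) :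
    let μ : ℕ → ℕ := fun i => if i < k then k + 1 else if i = k then k - 1 else 0
    let lam : ℕ → ℕ := fun i => if i < k - 1 then k + 1 else if i < k + 1 then k else 0
    let m : ℕ → ℕ := fun i => min (μ i) (lam i)
    ∀ δ : ℕ → ℕ, (IsDeletion k δ μ ∨ IsDeletion k δ lam) → IsDeletion (k - 1) δ m := by
  intro μ lam m δ hδ
  obtain ⟨n, rfl⟩ : ∃ n, k = n + 1 := ⟨k - 1, by omega⟩
  have hμ : psize μ = n * (n + 2) + (n + 2) + n := by
    rw [psize_eq_mul_add_add (n := n) (a := n + 2)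
      (fun i hi => by simp only [μ]; split_ifs <;> omega)
      (fun i hi => by simp only [μ]; split_ifs <;> omega)]
    simp [μ]
  have hlam : psize lam = n * (n + 2) + (n + 1) + (n + 1) := by
    rw [psize_eq_mul_add_add (n := n) (a := n + 2)
      (fun i hi => by simp only [lam]; split_ifs <;> omega)
      (fun i hi => by simp only [lam]; split_ifs <;> omega)]
    simp [lam]
  have hm : psize m = n * (n + 2) + (n + 1) + n := by
    rw [psize_eq_mul_add_add (n := n) (a := n + 2)
      (fun i hi => by simp only [m, μ, lam]; split_ifs <;> omega)
      (fun i hi => by simp only [m, μ, lam]; split_ifs <;> omega)]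
    simp [m, μ, lam]
  rcases hδ with hδ | hδ
  · have hrow : δ n ≤ n + 1 :=
      Nat.lt_succ_iff.mp (hδ.apply_lt_of_psize_lt (by rw [hμ]; nlinarith))
    have hmμ : m = Function.update μ n (n + 1) := by
      funext i; simp only [m, μ, lam, Function.update_apply]; split_ifs <;> omega
    exact hδ.of_le_of_psize_eq_succ (hmμ ▸ le_update_iff.mpr ⟨hrow, fun i _ => hδ.2.1 i⟩)
      (by omega)
  · have hrow : δ (n + 1) ≤ n :=
      Nat.lt_succ_iff.mp (hδ.apply_lt_of_psize_lt (by rw [hlam]; nlinarith))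
    have hmlam : m = Function.update lam (n + 1) n := by
      funext i; simp only [m, μ, lam, Function.update_apply]; split_ifs <;> omega
    exact hδ.of_le_of_psize_eq_succ (hmlam ▸ le_update_iff.mpr ⟨hrow, fun i _ => hδ.2.1 i⟩)
      (by omega)
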